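/- arXiv:1307.0168 — 3 statements merged into one kernel-verified Lean document; each statement's English description precedes it below -/
import Mathlib

section
/- Let G be a non-complete simple graph on n vertices not containing K_{r+1}, where r divides n. If α(G) = n - n/r, then G is isomorphic to the Turán graph T_{n,r}. -/
/-!
Testing the Rayleigh quotient of the Laplacian on `n • eᵥ - 𝟙` gives Fiedler's bound
`α(G) (n - 1) ≤ n deg v`. With `α(G) = n - n/r` this forces every degree to be at least
`n - n/r`, so `G` has at least `n (n - n/r) / 2 = e(T_{n,r})` edges. Being `K_{r+1}`-free, `G` is
then Turán-maximal, and Turán's theorem identifies it with `T_{n,r}`.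
-/

open SimpleGraph Matrix BigOperators

/-- The algebraic connectivity of a graph on a finite vertex set: the second-smallest
Laplacian eigenvalue, characterized as the infimum of Rayleigh quotients of the
Laplacian over nonzero vectors orthogonal to the all-ones vector. -/
noncomputable def algConn {V : Type*} [Fintype V] (G : SimpleGraph V) : ℝ :=
  letI := Classical.decEq V
  letI := Classical.decRel G.Adj
  sInf { a : ℝ | ∃ x : V → ℝ, x ≠ 0 ∧ ∑ v, x v = 0 ∧
    a = (x ⬝ᵥ (G.lapMatrix ℝ).mulVec x) / (x ⬝ᵥ x) }

open Finset

namespace SimpleGraph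

variable {V : Type*} [Fintype V] (G : SimpleGraph V) [DecidableRel G.Adj]

section Laplacian

variable [DecidableEq V]

theorem algConn_le_rayleigh {x : V → ℝ} (hx : x ≠ 0) (hsum : ∑ v, x v = 0) :
    algConn G ≤ (x ⬝ᵥ G.lapMatrix ℝ *ᵥ x) / (x ⬝ᵥ x) := by
  -- `algConn` is defined through the classical decidability instances.
  obtain rfl : ‹DecidableEq V› = Classical.decEq V := Subsingleton.elim _ _
  obtain rfl : ‹DecidableRel G.Adj› = Classical.decRel G.Adj := Subsingleton.elim _ _
  refine csInf_le ⟨0, fun a ⟨y, _, _, ha⟩ ↦ ha ▸ ?_⟩ ⟨x, hx, hsum, rfl⟩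
  classical
  exact div_nonneg ((posSemidef_lapMatrix ℝ G).dotProduct_mulVec_nonneg y)
    (dotProduct_self_star_nonneg y)

theorem dotProduct_lapMatrix_mulVec_sub_const (x : V → ℝ) (c : ℝ) :
    (x - fun _ ↦ c) ⬝ᵥ G.lapMatrix ℝ *ᵥ (x - fun _ ↦ c) = x ⬝ᵥ G.lapMatrix ℝ *ᵥ x := by
  simp only [← toLinearMap₂'_apply', lapMatrix_toLinearMap₂', Pi.sub_apply,
    sub_sub_sub_cancel_right]

theorem dotProduct_lapMatrix_mulVec_single (v : V) (c : ℝ) :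
    Pi.single v c ⬝ᵥ G.lapMatrix ℝ *ᵥ Pi.single v c = c ^ 2 * G.degree v := by
  rw [single_dotProduct, lapMatrix_mulVec_apply, Pi.single_eq_same,
    sum_eq_zero fun u hu ↦ Pi.single_eq_of_ne (G.ne_of_adj ((mem_neighborFinset G v u).1 hu)).symm _]
  ring

end Laplacian

theorem algConn_mul_le_card_mul_degree [Nontrivial V] (v : V) :
    algConn G * (Fintype.card V - 1) ≤ Fintype.card V * G.degree v := by
  classical
  set N : ℝ := (Fintype.card V : ℝ)
  set x : V → ℝ := Pi.single v N - fun _ ↦ 1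
  obtain ⟨u, huv⟩ := exists_ne v
  have hx : x ≠ 0 := fun h ↦ by simpa [x, Pi.single_eq_of_ne huv] using congrFun h u
  have hsum : ∑ w, x w = 0 := by simp [x, N]
  have hnorm : x ⬝ᵥ x = N * (N - 1) := by
    simp only [x, sub_dotProduct, dotProduct_sub, single_dotProduct, dotProduct_single]
    simp only [Pi.sub_apply, Pi.single_eq_same, dotProduct, mul_one, sum_const, card_univ,
      nsmul_eq_mul, sub_self, sub_zero, N]
    ring
  have hN : 1 < N := by simpa [N] using Fintype.one_lt_card (α := V)
  have hle := algConn_le_rayleigh G hx hsum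
  rw [dotProduct_lapMatrix_mulVec_sub_const, dotProduct_lapMatrix_mulVec_single, hnorm,
    le_div_iff₀ (by nlinarith)] at hle
  nlinarith

theorem card_sub_le_degree_of_algConn_eq [Nontrivial V] {k : ℕ} (hk : 0 < k)
    (hα : algConn G = Fintype.card V - k) (v : V) : Fintype.card V - k ≤ G.degree v := by
  have hfiedler := G.algConn_mul_le_card_mul_degree v
  rw [hα] at hfiedler
  by_contra! hlt
  have hlt' : (G.degree v : ℝ) + 1 ≤ Fintype.card V - k := by
    rw [le_sub_iff_add_le]
    exact_mod_cast (by omega : G.degree v + 1 + k ≤ Fintype.card V)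
  have hkR : (0 : ℝ) < k := by exact_mod_cast hk
  have hNR : (1 : ℝ) < Fintype.card V := by exact_mod_cast Fintype.one_lt_card (α := V)
  nlinarith

theorem card_mul_le_two_mul_card_edgeFinset {d : ℕ} (h : ∀ v, d ≤ G.degree v) :
    Fintype.card V * d ≤ 2 * #G.edgeFinset := by
  rw [← sum_degrees_eq_twice_card_edges, ← smul_eq_mul, ← card_univ]
  exact card_nsmul_le_sum _ _ _ fun v _ ↦ h v

theorem two_mul_card_edgeFinset_turanGraph_le {n r : ℕ} (hr : 0 < r) (hdvd : r ∣ n) :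
    2 * #(turanGraph n r).edgeFinset ≤ n * (n - n / r) := by
  obtain ⟨k, rfl⟩ := hdvd
  have h := mul_card_edgeFinset_turanGraph_le (n := r * k) (r := r)
  rw [Nat.mul_div_cancel_left k hr]
  obtain ⟨s, rfl⟩ : ∃ s, r = s + 1 := ⟨r - 1, by omega⟩
  rw [add_tsub_cancel_right] at h
  rw [show (s + 1) * k - k = s * k by rw [add_one_mul, Nat.add_sub_cancel]]
  nlinarith

variable {G} in
theorem isTuranMaximal_of_card_edgeFinset_turanGraph_le {r : ℕ} (hfree : G.CliqueFree (r + 1))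
    (h : #(turanGraph (Fintype.card V) r).edgeFinset ≤ #G.edgeFinset) : G.IsTuranMaximal r :=
  ⟨hfree, fun _ _ hH ↦ (hH.card_edgeFinset_le.trans_eq card_edgeFinset_turanGraph.symm).trans h⟩

end SimpleGraph

theorem stmt4_general {n r : ℕ} (hdvd : r ∣ n) (G : SimpleGraph (Fin n))
    (hnc : G ≠ ⊤) (hfree : G.CliqueFree (r + 1))
    (hα : algConn G = (n : ℝ) - ((n / r : ℕ) : ℝ)) :
    Nonempty (G ≃g SimpleGraph.turanGraph n r) := by
  classical
  have : Nontrivial (Fin n) := SimpleGraph.nontrivial_iff.mp ⟨G, ⊤, hnc⟩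
  have hn : 0 < n := Fin.pos_iff_nonempty.mpr inferInstance
  have hr : 0 < r := Nat.pos_of_dvd_of_pos hdvd hn
  have hk : 0 < n / r := Nat.div_pos (Nat.le_of_dvd hn hdvd) hr
  have hdeg (v : Fin n) : n - n / r ≤ G.degree v := by
    simpa using G.card_sub_le_degree_of_algConn_eq hk (by simpa using hα) v
  have hedges : #(turanGraph (Fintype.card (Fin n)) r).edgeFinset ≤ #G.edgeFinset := by
    have hG := G.card_mul_le_two_mul_card_edgeFinset hdeg
    have hT := two_mul_card_edgeFinset_turanGraph_le hr hdvd
    rw [Fintype.card_fin] at hG ⊢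
    omega
  have hiso := (isTuranMaximal_of_card_edgeFinset_turanGraph_le hfree hedges).nonempty_iso_turanGraph
  rwa [Fintype.card_fin] at hiso

theorem stmt4 {n r : ℕ} (hr : 0 < r) (hdvd : r ∣ n) (G : SimpleGraph (Fin n))
    (hnc : G ≠ ⊤) (hfree : G.CliqueFree (r + 1))
    (hα : algConn G = (n : ℝ) - ((n / r : ℕ) : ℝ)) :
    Nonempty (G ≃g SimpleGraph.turanGraph n r) :=
  stmt4_general hdvd G hnc hfree hα
end

section
/- Let G be a graph on n vertices not containing K_{r+1}, with n = kr + r - 1 (i.e., t = r-1), and suppose α(G) = n - ⌈n/r⌉ = n - (k+1). Then G is the Turán graph T_{n,r}. -/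
open SimpleGraph Matrix BigOperators

/-!
Since `L(G) + L(Gᶜ) = n I - J`, the hypothesis `α(G) = n - (k + 1)` says that
`x ⬝ L(Gᶜ) x ≤ (k + 1) ‖x‖²` for every `x ⟂ 𝟙`. Testing this on `x = d e_v - 𝟙_{N(v)}`, where
`N(v)` is the `Gᶜ`-neighbourhood of `v` and `d = |N(v)|`, shows that `Gᶜ` has maximum degree at
most `k` and that a vertex of `Gᶜ`-degree `k` is adjacent to every neighbour of its neighbours.

Since `G` has no `(r + 1)`-clique, the closed `Gᶜ`-neighbourhoods of a maximal clique of `G`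
cover the `n` vertices using at most `r (k + 1) = n + 1` incidences. This slack of one forces
non-adjacency in `G` to be transitive, so `G` is complete multipartite with at most `r` parts,
each of size at most `k + 1`, on `r (k + 1) - 1` vertices: a balanced partition, i.e. `T_{n,r}`.
-/

open Finset

theorem sum_sum_sub_sq {V : Type*} [Fintype V] (x : V → ℝ) :
    ∑ i, ∑ j, (x i - x j) ^ 2 = 2 * (Fintype.card V * (x ⬝ᵥ x) - (∑ i, x i) ^ 2) := by
  simp only [sub_sq, sum_add_distrib, sum_sub_distrib, sum_const, card_univ, dotProduct,
    ← mul_sum, ← sum_mul, nsmul_eq_mul]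
  ring_nf

theorem Finpartition.isEquipartition_and_card_parts_eq {α : Type*} [DecidableEq α]
    {s : Finset α} (P : Finpartition s) {r k : ℕ} (hsize : ∀ p ∈ P.parts, #p ≤ k + 1)
    (hnum : #P.parts ≤ r) (hs : #s + 1 = (k + 1) * r) :
    P.IsEquipartition ∧ #P.parts = min #s r := by
  obtain ⟨r, rfl⟩ : ∃ r', r = r' + 1 := ⟨r - 1, by cases r <;> simp_all⟩
  have hexp : (k + 1) * (r + 1) = r * (k + 1) + (k + 1) := by ring
  have hsum := P.sum_card_parts
  have hcap : #s ≤ #P.parts * (k + 1) := by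
    simpa [hsum] using sum_le_card_nsmul _ _ _ hsize
  refine ⟨Set.equitableOn_iff_exists_eq_eq_add_one.2 ⟨k, fun p hp => ?_⟩, ?_⟩
  · have hrest := sum_le_card_nsmul (P.parts.erase p) (fun q => #q) _
      fun q hq => hsize q (mem_of_mem_erase hq)
    rw [card_erase_of_mem hp, smul_eq_mul] at hrest
    have hsplit := add_sum_erase P.parts (fun q => #q) hp
    rw [hsum] at hsplit
    have hm : (#P.parts - 1) * (k + 1) ≤ r * (k + 1) := Nat.mul_le_mul_right _ (by omega)
    have := hsize p hp
    omega
  · have hle : #P.parts ≤ #s := P.card_parts_le_card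
    rcases hnum.lt_or_eq with hlt | heq
    · have hm : #P.parts * (k + 1) ≤ r * (k + 1) := Nat.mul_le_mul_right _ (by omega)
      obtain rfl : k = 0 := by omega
      omega
    · omega

namespace SimpleGraph

variable {V : Type*}

section Laplacian

variable [Fintype V] [DecidableEq V] (G : SimpleGraph V) [DecidableRel G.Adj]

theorem dotProduct_lapMatrix_mulVec (x : V → ℝ) :
    x ⬝ᵥ G.lapMatrix ℝ *ᵥ x = (∑ i, ∑ j, if G.Adj i j then (x i - x j) ^ 2 else 0) / 2 := by
  rw [← toLinearMap₂'_apply', lapMatrix_toLinearMap₂']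

theorem dotProduct_lapMatrix_mulVec_add_compl (x : V → ℝ) :
    x ⬝ᵥ G.lapMatrix ℝ *ᵥ x + x ⬝ᵥ Gᶜ.lapMatrix ℝ *ᵥ x =
      Fintype.card V * (x ⬝ᵥ x) - (∑ i, x i) ^ 2 := by
  have hsplit (i j : V) : ((if G.Adj i j then (x i - x j) ^ 2 else 0) +
      if Gᶜ.Adj i j then (x i - x j) ^ 2 else 0) = (x i - x j) ^ 2 := by
    by_cases hij : i = j
    · simp [hij]
    · by_cases h : G.Adj i j <;> simp [compl_adj, h, hij]
  rw [dotProduct_lapMatrix_mulVec, dotProduct_lapMatrix_mulVec, ← add_div, ← sum_add_distrib]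
  simp only [← sum_add_distrib, hsplit, sum_sum_sub_sq]
  ring

theorem algConn_mul_le {x : V → ℝ} (hx : ∑ i, x i = 0) :
    algConn G * (x ⬝ᵥ x) ≤ x ⬝ᵥ G.lapMatrix ℝ *ᵥ x := by
  rcases eq_or_ne x 0 with rfl | hx0
  · simp
  have hpos : 0 < x ⬝ᵥ x := by
    simpa using (dotProduct_star_self_pos_iff (v := x)).2 hx0
  rw [← le_div_iff₀ hpos]
  have hnonneg (y : V → ℝ) : 0 ≤ y ⬝ᵥ G.lapMatrix ℝ *ᵥ y / (y ⬝ᵥ y) :=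
    div_nonneg ((posSemidef_lapMatrix ℝ G).dotProduct_mulVec_nonneg y)
      (dotProduct_self_star_nonneg y)
  -- `algConn` is stated with the classical decidability instances
  obtain rfl : ‹DecidableRel G.Adj› = Classical.decRel G.Adj := Subsingleton.elim _ _
  obtain rfl : ‹DecidableEq V› = Classical.decEq V := Subsingleton.elim _ _
  refine csInf_le ⟨0, ?_⟩ ⟨x, hx0, hx, rfl⟩
  rintro a ⟨y, -, -, rfl⟩
  exact hnonneg y

theorem dotProduct_compl_lapMatrix_mulVec_le {c : ℝ} (hG : algConn G = Fintype.card V - c)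
    {x : V → ℝ} (hx : ∑ i, x i = 0) : x ⬝ᵥ Gᶜ.lapMatrix ℝ *ᵥ x ≤ c * (x ⬝ᵥ x) := by
  have hsum := dotProduct_lapMatrix_mulVec_add_compl G x
  have hG' := algConn_mul_le G hx
  rw [hx] at hsum
  rw [hG] at hG'
  linarith

def starVector (v : V) : V → ℝ :=
  fun z => if z = v then (G.degree v : ℝ) else if G.Adj v z then -1 else 0

variable {G}

theorem starVector_self (v : V) : G.starVector v v = G.degree v := by
  simp [starVector]

theorem starVector_of_adj {v u : V} (h : G.Adj v u) : G.starVector v u = -1 := by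
  simp [starVector, h.ne', h]

theorem starVector_of_not_adj {v w : V} (hwv : w ≠ v) (h : ¬G.Adj v w) :
    G.starVector v w = 0 := by
  simp [starVector, hwv, h]

theorem starVector_eq_add (v z : V) : G.starVector v z =
    (if z = v then (G.degree v : ℝ) else 0) + if z ∈ G.neighborFinset v then -1 else 0 := by
  by_cases hz : z = v
  · simp [starVector, hz]
  · by_cases h : G.Adj v z <;> simp [starVector, hz, h]

theorem sum_starVector (v : V) : ∑ z, G.starVector v z = 0 := by
  simp only [starVector_eq_add, sum_add_distrib, sum_ite_eq', mem_univ, if_true, sum_ite_mem,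
    univ_inter, sum_const, card_neighborFinset_eq_degree, nsmul_eq_mul, mul_neg, mul_one,
    add_neg_cancel]

theorem starVector_dotProduct_self (v : V) :
    G.starVector v ⬝ᵥ G.starVector v = G.degree v * (G.degree v + 1) := by
  have hsq (z : V) : G.starVector v z * G.starVector v z =
      (if z = v then (G.degree v : ℝ) ^ 2 else 0) + if z ∈ G.neighborFinset v then 1 else 0 := by
    by_cases hz : z = v
    · simp [starVector, hz, sq]
    · by_cases h : G.Adj v z <;> simp [starVector, hz, h]
  simp only [dotProduct, hsq, sum_add_distrib, sum_ite_eq', mem_univ, if_true, sum_ite_mem,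
    univ_inter, sum_const, card_neighborFinset_eq_degree, nsmul_eq_mul, mul_one]
  ring

theorem sum_adj_sq_starVector_self (v : V) :
    ∑ j, (if G.Adj v j then (G.starVector v v - G.starVector v j) ^ 2 else 0) =
      G.degree v * (G.degree v + 1) ^ 2 := by
  have hterm (j : V) : (if G.Adj v j then (G.starVector v v - G.starVector v j) ^ 2 else 0) =
      if j ∈ G.neighborFinset v then ((G.degree v : ℝ) + 1) ^ 2 else 0 := by
    by_cases h : G.Adj v j
    · simp [h, starVector_self, starVector_of_adj h]
    · simp [h]
  simp only [hterm, sum_ite_mem, univ_inter, sum_const, card_neighborFinset_eq_degree,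
    nsmul_eq_mul]

theorem sq_le_sum_adj_sq_starVector {v u : V} (hvu : G.Adj v u) :
    ((G.degree v : ℝ) + 1) ^ 2 ≤
      ∑ j, if G.Adj u j then (G.starVector v u - G.starVector v j) ^ 2 else 0 := by
  refine le_of_eq_of_le ?_ (single_le_sum (fun j _ => ?_) (mem_univ v))
  · simp [hvu.symm, starVector_self, starVector_of_adj hvu]
    ring
  · split_ifs <;> positivity

theorem sq_lt_sum_adj_sq_starVector {v u w : V} (hvu : G.Adj v u) (huw : G.Adj u w)
    (hwv : w ≠ v) (hvw : ¬G.Adj v w) :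
    ((G.degree v : ℝ) + 1) ^ 2 <
      ∑ j, if G.Adj u j then (G.starVector v u - G.starVector v j) ^ 2 else 0 := by
  refine lt_of_lt_of_le ?_ (add_le_sum (fun j _ => ?_) (mem_univ v) (mem_univ w) hwv.symm)
  · simp [hvu.symm, huw, starVector_self, starVector_of_adj hvu, starVector_of_not_adj hwv hvw]
    ring_nf
    linarith
  · split_ifs <;> positivity

theorem le_two_mul_dotProduct_lapMatrix_mulVec_starVector (v : V) :
    G.degree v * ((G.degree v : ℝ) + 1) ^ 2 +
        ∑ i ∈ G.neighborFinset v,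
          ∑ j, (if G.Adj i j then (G.starVector v i - G.starVector v j) ^ 2 else 0) ≤
      2 * (G.starVector v ⬝ᵥ G.lapMatrix ℝ *ᵥ G.starVector v) := by
  set x := G.starVector v
  have h := sum_le_sum_of_subset_of_nonneg (subset_univ (insert v (G.neighborFinset v)))
    (f := fun i => ∑ j, if G.Adj i j then (x i - x j) ^ 2 else 0)
    fun i _ _ => sum_nonneg fun j _ => by split_ifs <;> positivity
  rw [sum_insert (by simp), sum_adj_sq_starVector_self] at h
  rw [dotProduct_lapMatrix_mulVec, mul_div_cancel₀ _ two_ne_zero]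
  exact h

theorem degree_mul_sq_le_dotProduct_lapMatrix_mulVec_starVector (v : V) :
    G.degree v * ((G.degree v : ℝ) + 1) ^ 2 ≤
      G.starVector v ⬝ᵥ G.lapMatrix ℝ *ᵥ G.starVector v := by
  have hN := card_nsmul_le_sum (G.neighborFinset v) _ _
    fun i hi => sq_le_sum_adj_sq_starVector ((mem_neighborFinset G v i).1 hi)
  rw [card_neighborFinset_eq_degree, nsmul_eq_mul] at hN
  linarith [le_two_mul_dotProduct_lapMatrix_mulVec_starVector (G := G) v]

theorem degree_mul_sq_lt_dotProduct_lapMatrix_mulVec_starVector {v u w : V} (hvu : G.Adj v u)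
    (huw : G.Adj u w) (hwv : w ≠ v) (hvw : ¬G.Adj v w) :
    G.degree v * ((G.degree v : ℝ) + 1) ^ 2 <
      G.starVector v ⬝ᵥ G.lapMatrix ℝ *ᵥ G.starVector v := by
  have hN := sum_lt_sum (s := G.neighborFinset v) (f := fun _ => ((G.degree v : ℝ) + 1) ^ 2)
    (fun i hi => sq_le_sum_adj_sq_starVector ((mem_neighborFinset G v i).1 hi))
    ⟨u, (mem_neighborFinset G v u).2 hvu, sq_lt_sum_adj_sq_starVector hvu huw hwv hvw⟩
  rw [sum_const, card_neighborFinset_eq_degree, nsmul_eq_mul] at hN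
  linarith [le_two_mul_dotProduct_lapMatrix_mulVec_starVector (G := G) v]

theorem degree_le_of_dotProduct_lapMatrix_mulVec_le {k : ℕ}
    (hG : ∀ x : V → ℝ, ∑ i, x i = 0 → x ⬝ᵥ G.lapMatrix ℝ *ᵥ x ≤ (k + 1) * (x ⬝ᵥ x)) (v : V) :
    G.degree v ≤ k := by
  have hup := hG _ (sum_starVector (G := G) v)
  rw [starVector_dotProduct_self] at hup
  have hlow := degree_mul_sq_le_dotProduct_lapMatrix_mulVec_starVector (G := G) v
  by_contra! hk
  have hk' : (k : ℝ) + 1 ≤ G.degree v := by exact_mod_cast hk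
  nlinarith

theorem adj_of_dotProduct_lapMatrix_mulVec_le {k : ℕ}
    (hG : ∀ x : V → ℝ, ∑ i, x i = 0 → x ⬝ᵥ G.lapMatrix ℝ *ᵥ x ≤ (k + 1) * (x ⬝ᵥ x))
    {v u w : V} (hv : G.degree v = k) (hvu : G.Adj v u) (huw : G.Adj u w) (hwv : w ≠ v) :
    G.Adj v w := by
  by_contra hvw
  have hup := hG _ (sum_starVector (G := G) v)
  rw [starVector_dotProduct_self, hv] at hup
  have hlow := degree_mul_sq_lt_dotProduct_lapMatrix_mulVec_starVector hvu huw hwv hvw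
  rw [hv] at hlow
  linarith

end Laplacian

section Cliques

variable {G : SimpleGraph V}

theorem IsClique.card_le_of_cliqueFree {r : ℕ} (hfree : G.CliqueFree (r + 1)) {s : Finset V}
    (hs : G.IsClique (s : Set V)) : #s ≤ r := by
  by_contra! h
  exact hfree.mono h s ⟨hs, rfl⟩

theorem exists_compl_adj_of_maximal [DecidableEq V] {S : Finset V}
    (hS : Maximal (fun s : Finset V => G.IsClique (s : Set V)) S) {z : V} (hz : z ∉ S) :
    ∃ s ∈ S, Gᶜ.Adj z s := by
  by_contra! h
  refine hz (hS.2 (y := insert z S) ?_ (subset_insert z S) (mem_insert_self z S))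
  change G.IsClique ((insert z S : Finset V) : Set V)
  rw [coe_insert]
  refine hS.1.insert fun s hs hzs => ?_
  by_contra hG
  exact h s hs ((compl_adj G z s).2 ⟨hzs, hG⟩)

variable [Fintype V] [DecidableEq V] [DecidableRel G.Adj]

theorem card_add_card_filter_compl_adj_le {S : Finset V}
    (hS : Maximal (fun s : Finset V => G.IsClique (s : Set V)) S) (v : V) :
    Fintype.card V + #{s ∈ S | Gᶜ.Adj v s} ≤ ∑ s ∈ S, (Gᶜ.degree s + 1) + 1 := by
  -- double count the pairs `(s, z)` with `s ∈ S` and `z` in the closed `Gᶜ`-neighbourhood of `s`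
  set R : V → V → Prop := fun s z => z = s ∨ Gᶜ.Adj s z
  have hdeg (s : V) : #(bipartiteAbove R univ s) = Gᶜ.degree s + 1 := by
    have : bipartiteAbove R univ s = insert s (Gᶜ.neighborFinset s) := by
      ext z; simp [bipartiteAbove, R]
    rw [this, card_insert_of_notMem (by simp), card_neighborFinset_eq_degree]
  have hcover (z : V) : 1 ≤ #(bipartiteBelow R S z) := by
    rw [one_le_card]
    by_cases hz : z ∈ S
    · exact ⟨z, (mem_bipartiteBelow R).2 ⟨hz, Or.inl rfl⟩⟩
    · obtain ⟨s, hs, hzs⟩ := exists_compl_adj_of_maximal hS hz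
      exact ⟨s, (mem_bipartiteBelow R).2 ⟨hs, Or.inr hzs.symm⟩⟩
  have hv : #{s ∈ S | Gᶜ.Adj v s} ≤ #(bipartiteBelow R S v) :=
    card_le_card fun s hs => by
      rw [mem_filter] at hs
      exact (mem_bipartiteBelow R).2 ⟨hs.1, Or.inr hs.2.symm⟩
  have hrest := card_nsmul_le_sum (univ.erase v) _ _ fun z _ => hcover z
  rw [card_erase_of_mem (mem_univ v), card_univ, smul_eq_mul, mul_one] at hrest
  have hcount := sum_card_bipartiteAbove_eq_sum_card_bipartiteBelow R (s := S) (t := univ)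
  rw [← add_sum_erase _ _ (mem_univ v)] at hcount
  simp only [hdeg] at hcount
  have : 0 < Fintype.card V := Fintype.card_pos_iff.2 ⟨v⟩
  omega

theorem isCompleteMultipartite_of_compl_degree_le {r k : ℕ} (hfree : G.CliqueFree (r + 1))
    (hdeg : ∀ v, Gᶜ.degree v ≤ k)
    (hclosed : ∀ {v u w}, Gᶜ.degree v = k → Gᶜ.Adj v u → Gᶜ.Adj u w → w ≠ v → Gᶜ.Adj v w)
    (hcard : Fintype.card V + 1 = (k + 1) * r) : G.IsCompleteMultipartite := by
  refine ⟨fun u v w huv hvw huw => ?_⟩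
  have hvu : v ≠ u := by rintro rfl; exact hvw huw
  have hvw' : v ≠ w := by rintro rfl; exact huv huw
  obtain ⟨S, hsub, hS⟩ := Finite.exists_le_maximal (p := fun s : Finset V => G.IsClique (s : Set V))
    (a := {u, w}) (by simpa [coe_pair] using (isClique_pair).2 fun _ => huw)
  have hu : u ∈ S := hsub (by simp)
  have hw : w ∈ S := hsub (by simp)
  have htwo : 2 ≤ #{s ∈ S | Gᶜ.Adj v s} := by
    have : {u, w} ⊆ {s ∈ S | Gᶜ.Adj v s} := by
      simp [insert_subset_iff, hu, hw, compl_adj, hvu, hvw', huv, hvw, adj_comm]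
    simpa [card_pair huw.ne] using card_le_card this
  -- `v` is covered twice, which uses up the slack: every `s ∈ S` has `Gᶜ`-degree exactly `k`
  have hsum := card_add_card_filter_compl_adj_le hS v
  have hS_card : #S * (k + 1) ≤ r * (k + 1) :=
    Nat.mul_le_mul_right _ (IsClique.card_le_of_cliqueFree hfree hS.1)
  have hle : ∑ s ∈ S, (Gᶜ.degree s + 1) ≤ #S * (k + 1) := by
    simpa using sum_le_card_nsmul S _ _ fun s _ => Nat.add_le_add_right (hdeg s) 1
  have htight : ∑ s ∈ S, (Gᶜ.degree s + 1) = ∑ s ∈ S, (k + 1) := by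
    rw [sum_const, smul_eq_mul]
    have := mul_comm r (k + 1)
    omega
  have hku : Gᶜ.degree u = k := by
    simpa using (sum_eq_sum_iff_of_le fun s _ => Nat.add_le_add_right (hdeg s) 1).1 htight u hu
  have := hclosed hku ((compl_adj G u v).2 ⟨hvu.symm, huv⟩) ((compl_adj G v w).2 ⟨hvw', hvw⟩)
    huw.ne.symm
  exact ((compl_adj G u w).1 this).2 huw

end Cliques

section Turan

variable [Fintype V] [DecidableEq V] {G : SimpleGraph V}

theorem nonempty_iso_turanGraph_of_isEquipartition {r : ℕ} (P : Finpartition (univ : Finset V))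
    (hP : P.IsEquipartition) (hadj : ∀ a b, G.Adj a b ↔ P.part a ≠ P.part b)
    (hparts : #P.parts = min (Fintype.card V) r) :
    Nonempty (G ≃g turanGraph (Fintype.card V) r) := by
  obtain ⟨f, hf⟩ := hP.exists_partPreservingEquiv
  refine ⟨⟨(Equiv.subtypeUnivEquiv mem_univ).symm.trans f, fun {a b} => ?_⟩⟩
  have hlt (x : V) : (f ⟨x, mem_univ x⟩ : ℕ) < Fintype.card V := (f ⟨x, mem_univ x⟩).2
  change (f ⟨a, mem_univ a⟩ : ℕ) % r ≠ f ⟨b, mem_univ b⟩ % r ↔ G.Adj a b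
  rw [hadj, Ne, Ne, not_iff_not]
  refine Iff.trans ?_ (hf ⟨a, mem_univ a⟩ ⟨b, mem_univ b⟩).symm
  rw [hparts]
  rcases le_total r (Fintype.card V) with h | h
  · rw [min_eq_right h]
  · rw [min_eq_left h, Nat.mod_eq_of_lt (hlt a), Nat.mod_eq_of_lt (hlt b),
      Nat.mod_eq_of_lt ((hlt a).trans_le h), Nat.mod_eq_of_lt ((hlt b).trans_le h)]

theorem IsCompleteMultipartite.nonempty_iso_turanGraph [DecidableRel G.Adj] {r k : ℕ}
    (hG : G.IsCompleteMultipartite) (hfree : G.CliqueFree (r + 1))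
    (hdeg : ∀ v, Gᶜ.degree v ≤ k) (hcard : Fintype.card V + 1 = (k + 1) * r) :
    Nonempty (G ≃g turanGraph (Fintype.card V) r) := by
  classical
  let P := Finpartition.ofSetoid hG.setoid
  have hmem {a b : V} : b ∈ P.part a ↔ ¬G.Adj a b := Finpartition.mem_part_ofSetoid_iff_rel
  have hadj (a b : V) : G.Adj a b ↔ P.part a ≠ P.part b := by
    rw [Ne, ← P.mem_part_iff_part_eq_part (mem_univ a) (mem_univ b), hmem, not_not, adj_comm]
  have hsize : ∀ p ∈ P.parts, #p ≤ k + 1 := by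
    intro p hp
    obtain ⟨a, ha⟩ := P.nonempty_of_mem_parts hp
    rw [← P.part_eq_of_mem hp ha]
    calc #(P.part a) ≤ #(insert a (Gᶜ.neighborFinset a)) := card_le_card fun b hb => by
          rw [hmem] at hb
          by_cases hab : a = b
          · simp [hab]
          · simp [compl_adj, hab, hb]
      _ ≤ k + 1 := (card_insert_le _ _).trans (by simpa using hdeg a)
  have hnum : #P.parts ≤ r := by
    obtain ⟨t, -, ht⟩ := P.exists_subset_part_bijOn
    rw [← card_eq_of_equiv ht.equiv]
    exact IsClique.card_le_of_cliqueFree hfree fun a ha b hb hab =>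
      (hadj a b).2 (ht.injOn.ne ha hb hab)
  obtain ⟨hP, hparts⟩ := P.isEquipartition_and_card_parts_eq hsize hnum hcard
  exact nonempty_iso_turanGraph_of_isEquipartition P hP hadj hparts

end Turan

end SimpleGraph

theorem stmt8 {n r k : ℕ} (hr : 2 ≤ r) (hn : n = k * r + r - 1)
    (G : SimpleGraph (Fin n)) (hfree : G.CliqueFree (r + 1))
    (hα : algConn G = (n : ℝ) - ((k : ℝ) + 1)) :
    Nonempty (G ≃g SimpleGraph.turanGraph n r) := by
  classical
  have hcard : Fintype.card (Fin n) + 1 = (k + 1) * r := by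
    rw [Fintype.card_fin, hn, add_one_mul]
    have : 0 < k * r + r := by positivity
    omega
  have hspec (x : Fin n → ℝ) (hx : ∑ i, x i = 0) :
      x ⬝ᵥ Gᶜ.lapMatrix ℝ *ᵥ x ≤ (k + 1) * (x ⬝ᵥ x) :=
    dotProduct_compl_lapMatrix_mulVec_le G (by rwa [Fintype.card_fin]) hx
  have hdeg := degree_le_of_dotProduct_lapMatrix_mulVec_le hspec
  have hG := isCompleteMultipartite_of_compl_degree_le hfree hdeg
    (adj_of_dotProduct_lapMatrix_mulVec_le hspec) hcard
  have := hG.nonempty_iso_turanGraph hfree hdeg hcard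
  rwa [Fintype.card_fin] at this
end

section
/- Let G be the graph of order n = r + k obtained from K_r (3 ≤ r ≤ n - 1) with two distinguished vertices u, v and a path P = u₁u₂…u_k by adding the edges u u₁ and v u₁. Then α(G) > α(Ki_{n,r}). -/
open SimpleGraph Matrix BigOperators

/-- `pathsGraph r k l` : the complete graph `K_r` (on `Fin r`), with a pendant path
`u u₁ … u_k` attached at the clique vertex `u = r-1` (path vertices `Sum.inr (Sum.inl i)`)
and a pendant path `v v₁ … v_l` attached at the clique vertex `v = r-2`
(path vertices `Sum.inr (Sum.inr i)`). -/
def pathsGraph (r k l : ℕ) : SimpleGraph (Fin r ⊕ (Fin k ⊕ Fin l)) :=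
  SimpleGraph.fromRel (fun x y =>
    match x, y with
    | .inl _, .inl _ => True
    | .inl a, .inr (.inl i) => a.val = r - 1 ∧ i.val = 0
    | .inl a, .inr (.inr i) => a.val = r - 2 ∧ i.val = 0
    | .inr (.inl i), .inr (.inl j) => i.val + 1 = j.val
    | .inr (.inr i), .inr (.inr j) => i.val + 1 = j.val
    | _, _ => False)

/-- The kite graph `Ki_{n,r}` : the complete graph `K_r` with a pendant path of length
`n - r` attached at the clique vertex `r-1`. -/
def kiteGraph (n r : ℕ) : SimpleGraph (Fin r ⊕ Fin (n - r)) :=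
  SimpleGraph.fromRel (fun x y =>
    match x, y with
    | .inl _, .inl _ => True
    | .inl a, .inr i => a.val = r - 1 ∧ i.val = 0
    | .inr i, .inr j => i.val + 1 = j.val
    | _, _ => False)

noncomputable instance (r k l : ℕ) : DecidableRel (pathsGraph r k l).Adj :=
  Classical.decRel _

noncomputable instance (n r : ℕ) : DecidableRel (kiteGraph n r).Adj :=
  Classical.decRel _

/-- `cliquePlusPath2 r k` : the complete graph `K_r` on `Fin r` (with distinguished
vertices `u = r-1` and `v = r-2`) together with a path `u₁ u₂ … u_k` (the vertices
`Sum.inr i`), where the edges `u u₁` and `v u₁` are added. -/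
def cliquePlusPath2 (r k : ℕ) : SimpleGraph (Fin r ⊕ Fin k) :=
  SimpleGraph.fromRel (fun x y =>
    match x, y with
    | .inl _, .inl _ => True
    | .inl a, .inr i => (a.val = r - 1 ∨ a.val = r - 2) ∧ i.val = 0
    | .inr i, .inr j => i.val + 1 = j.val
    | _, _ => False)

noncomputable instance (r k : ℕ) : DecidableRel (cliquePlusPath2 r k).Adj :=
  Classical.decRel _

/-!
Adding the edge `v u₁` to the kite changes the Laplacian quadratic form by `(x v - x u₁)²`, so
`α(Ki) ≤ α(G)`. If equality held, a unit Fiedler vector `x` of `G` would satisfy `x v = x u₁` and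
would also minimise the Rayleigh quotient of the kite, hence be an eigenvector of its Laplacian for
`α(Ki)`. Fiedler's bound `α ≤ n δ / (n - 1)` at a clique vertex of degree `r - 1` gives
`α(Ki) < r`; with this, the eigenvalue equations at the clique vertices force `x` to be constant on
the clique, and those along the path propagate the constant to all of `x`, contradicting `x ⊥ 𝟙`.
-/

open Finset

lemma exists_smul_dotProduct_self_eq_one {n : Type*} [Fintype n] (A : Matrix n n ℝ)
    {y : n → ℝ} (hy : y ≠ 0) : ∃ c : ℝ, (c • y) ⬝ᵥ (c • y) = 1 ∧
      (c • y) ⬝ᵥ A *ᵥ (c • y) = (y ⬝ᵥ A *ᵥ y) / (y ⬝ᵥ y) := by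
  have hpos : 0 < y ⬝ᵥ y := by simpa using dotProduct_self_star_pos_iff.mpr hy
  have hsq : (√(y ⬝ᵥ y))⁻¹ * (√(y ⬝ᵥ y))⁻¹ = (y ⬝ᵥ y)⁻¹ := by
    rw [← mul_inv, Real.mul_self_sqrt hpos.le]
  refine ⟨(√(y ⬝ᵥ y))⁻¹, ?_, ?_⟩ <;>
    simp only [mulVec_smul, smul_dotProduct, dotProduct_smul, smul_eq_mul, ← mul_assoc, hsq]
  · exact inv_mul_cancel₀ hpos.ne'
  · exact inv_mul_eq_div _ _

namespace SimpleGraph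

variable {V : Type*} [Fintype V] [DecidableEq V] {G : SimpleGraph V} [DecidableRel G.Adj]

lemma lapMatrix_mulVec_apply_eq_sum_ite (x : V → ℝ) (i : V) :
    (G.lapMatrix ℝ *ᵥ x) i = ∑ j, if G.Adj i j then x i - x j else 0 := by
  rw [lapMatrix_mulVec_apply, ← card_neighborFinset_eq_degree, neighborFinset_eq_filter,
    sum_filter, card_filter, Nat.cast_sum, sum_mul, ← sum_sub_distrib]
  congr! 1 with j
  split_ifs <;> simp

lemma dotProduct_lapMatrix_mulVec_comm (x y : V → ℝ) :
    x ⬝ᵥ G.lapMatrix ℝ *ᵥ y = y ⬝ᵥ G.lapMatrix ℝ *ᵥ x := by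
  rw [dotProduct_mulVec, ← mulVec_transpose, (isSymm_lapMatrix ℝ G).eq, dotProduct_comm]

lemma sum_lapMatrix_mulVec (x : V → ℝ) : ∑ i, (G.lapMatrix ℝ *ᵥ x) i = 0 := by
  rw [← one_dotProduct, dotProduct_lapMatrix_mulVec_comm, Pi.one_def,
    lapMatrix_mulVec_const_eq_zero, dotProduct_zero]

lemma dotProduct_lapMatrix_mulVec_nonneg (x : V → ℝ) : 0 ≤ x ⬝ᵥ G.lapMatrix ℝ *ᵥ x := by
  rw [← toLinearMap₂'_apply', lapMatrix_toLinearMap₂']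
  positivity

lemma dotProduct_lapMatrix_sup_edge_mulVec {a b : V} (hab : a ≠ b) (hG : ¬G.Adj a b)
    (x : V → ℝ) : x ⬝ᵥ (G ⊔ edge a b).lapMatrix ℝ *ᵥ x =
      x ⬝ᵥ G.lapMatrix ℝ *ᵥ x + (x a - x b) ^ 2 := by
  have hG' : ¬G.Adj b a := fun h => hG h.symm
  have hsplit : ∀ i j, (if (G ⊔ edge a b).Adj i j then (x i - x j) ^ 2 else 0) =
      (if G.Adj i j then (x i - x j) ^ 2 else 0) +
        ((if i = a then if j = b then (x a - x b) ^ 2 else 0 else 0) +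
          (if i = b then if j = a then (x a - x b) ^ 2 else 0 else 0)) := by
    intro i j
    by_cases hi : i = a ∧ j = b
    · obtain ⟨rfl, rfl⟩ := hi
      simp [hG, edge_adj, hab, hab.symm]
    by_cases hi' : i = b ∧ j = a
    · obtain ⟨rfl, rfl⟩ := hi'
      simp [hG', edge_adj, hab, hab.symm]
      ring
    have hne : ¬(edge a b).Adj i j := by rw [edge_adj]; tauto
    simp +contextual [hne, not_and.mp hi, not_and.mp hi']
  rw [← toLinearMap₂'_apply', ← toLinearMap₂'_apply', lapMatrix_toLinearMap₂',
    lapMatrix_toLinearMap₂']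
  simp only [hsplit, sum_add_distrib, sum_ite_irrel, sum_ite_eq', mem_univ, if_true,
    sum_const_zero]
  ring

-- `algConn` is defined with classical decidability instances; this restates it with the ambient ones.
lemma algConn_eq_sInf : algConn G = sInf {a : ℝ | ∃ x : V → ℝ, x ≠ 0 ∧ ∑ v, x v = 0 ∧
    a = (x ⬝ᵥ G.lapMatrix ℝ *ᵥ x) / (x ⬝ᵥ x)} := by
  unfold algConn
  congr!

lemma algConn_mul_dotProduct_self_le {x : V → ℝ} (hx : ∑ v, x v = 0) :
    algConn G * (x ⬝ᵥ x) ≤ x ⬝ᵥ G.lapMatrix ℝ *ᵥ x := by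
  rcases eq_or_ne x 0 with rfl | hx0
  · simp
  have hpos : 0 < x ⬝ᵥ x := by simpa using dotProduct_self_star_pos_iff.mpr hx0
  rw [← le_div_iff₀ hpos, algConn_eq_sInf]
  refine csInf_le ⟨0, ?_⟩ ⟨x, hx0, hx, rfl⟩
  rintro _ ⟨y, -, -, rfl⟩
  exact div_nonneg (dotProduct_lapMatrix_mulVec_nonneg y)
    (by simpa using dotProduct_self_star_nonneg y)

lemma exists_algConn_eq [Nontrivial V] :
    ∃ x : V → ℝ, x ⬝ᵥ x = 1 ∧ ∑ v, x v = 0 ∧ x ⬝ᵥ G.lapMatrix ℝ *ᵥ x = algConn G := by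
  set K : Set (V → ℝ) := {x | x ⬝ᵥ x = 1 ∧ ∑ v, x v = 0}
  have hK : ∀ {y : V → ℝ}, y ≠ 0 → ∑ v, y v = 0 → ∃ z ∈ K,
      z ⬝ᵥ G.lapMatrix ℝ *ᵥ z = (y ⬝ᵥ G.lapMatrix ℝ *ᵥ y) / (y ⬝ᵥ y) := by
    intro y hy hsum
    obtain ⟨c, hc1, hc2⟩ := exists_smul_dotProduct_self_eq_one (G.lapMatrix ℝ) hy
    exact ⟨c • y, ⟨hc1, by simp [← mul_sum, hsum]⟩, hc2⟩
  have hbounded : K ⊆ Set.univ.pi fun _ => Set.Icc (-1) 1 := by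
    rintro x ⟨hx, -⟩ i -
    rw [Set.mem_Icc, ← abs_le, ← sq_le_one_iff_abs_le_one, sq, ← hx]
    exact single_le_sum (f := fun j => x j * x j) (fun j _ => mul_self_nonneg _) (mem_univ i)
  have hcompact : IsCompact K := by
    refine (isCompact_univ_pi fun _ => isCompact_Icc).of_isClosed_subset ?_ hbounded
    exact (isClosed_eq (by unfold dotProduct; fun_prop) continuous_const).inter
      (isClosed_eq (by fun_prop) continuous_const)
  obtain ⟨a, b, hab⟩ := exists_pair_ne V
  have hne : Pi.single a 1 - Pi.single b 1 ≠ (0 : V → ℝ) :=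
    fun h => by simpa [hab] using congrFun h a
  obtain ⟨z, hzK, -⟩ := hK hne (by simp)
  obtain ⟨x, hxK, hmin⟩ := hcompact.exists_isMinOn ⟨z, hzK⟩
    (by unfold dotProduct mulVec dotProduct; fun_prop : Continuous fun x : V → ℝ =>
      x ⬝ᵥ G.lapMatrix ℝ *ᵥ x).continuousOn
  refine ⟨x, hxK.1, hxK.2, le_antisymm ?_ ?_⟩
  · rw [algConn_eq_sInf]
    refine le_csInf ⟨_, _, hne, by simp, rfl⟩ ?_
    rintro _ ⟨y, hy, hsum, rfl⟩
    obtain ⟨z, hzK, hz⟩ := hK hy hsum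
    exact hz ▸ hmin hzK
  · simpa [hxK.1] using algConn_mul_dotProduct_self_le (G := G) hxK.2

lemma lapMatrix_mulVec_eq_algConn_smul {x : V → ℝ} (hsum : ∑ v, x v = 0)
    (hx : x ⬝ᵥ G.lapMatrix ℝ *ᵥ x = algConn G * (x ⬝ᵥ x)) :
    G.lapMatrix ℝ *ᵥ x = algConn G • x := by
  obtain ⟨w, hw⟩ : ∃ w, G.lapMatrix ℝ *ᵥ x - algConn G • x = w := ⟨_, rfl⟩
  have hwsum : ∑ v, w v = 0 := by
    simp [← hw, sum_sub_distrib, sum_lapMatrix_mulVec, ← mul_sum, hsum]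
  have hLx : w ⬝ᵥ G.lapMatrix ℝ *ᵥ x = w ⬝ᵥ w + algConn G * (w ⬝ᵥ x) := by
    rw [← sub_eq_iff_eq_add, ← smul_eq_mul, ← dotProduct_smul, ← dotProduct_sub, hw]
  -- `x + t • w` is admissible for every `t`, and the quotient is minimal at `t = 0`
  have hquad : ∀ t : ℝ, 0 ≤ (w ⬝ᵥ G.lapMatrix ℝ *ᵥ w - algConn G * (w ⬝ᵥ w)) * (t * t)
      + 2 * (w ⬝ᵥ w) * t + 0 := by
    intro t
    have h := algConn_mul_dotProduct_self_le (G := G) (x := x + t • w)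
      (by simp [sum_add_distrib, ← mul_sum, hsum, hwsum])
    simp only [mulVec_add, mulVec_smul, add_dotProduct, dotProduct_add, smul_dotProduct,
      dotProduct_smul, smul_eq_mul, dotProduct_lapMatrix_mulVec_comm x w,
      dotProduct_comm x w] at h
    linear_combination h + hx + 2 * t * hLx
  have hdisc := discrim_le_zero hquad
  rw [discrim] at hdisc
  rw [← sub_eq_zero, hw, ← dotProduct_self_eq_zero]
  nlinarith [sq_nonneg (w ⬝ᵥ w)]

lemma algConn_mul_card_sub_one_le (a : V) :
    algConn G * (Fintype.card V - 1) ≤ Fintype.card V * G.degree a := by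
  obtain ⟨n, hn⟩ : ∃ n : ℝ, Fintype.card V = n := ⟨_, rfl⟩
  have hnpos : 0 < n := by simpa [← hn] using Fintype.card_pos_iff.mpr ⟨a⟩
  have hsum : ∑ v, n * (Pi.single a 1 : V → ℝ) v = n := by simp [← mul_sum]
  have hLaa : G.lapMatrix ℝ a a = G.degree a := by simp [lapMatrix, degMatrix]
  -- Fiedler's test vector `n • e_a - 𝟙`
  have hLz : G.lapMatrix ℝ *ᵥ (n • Pi.single a 1 - 1) = n • G.lapMatrix ℝ *ᵥ Pi.single a 1 := by
    rw [mulVec_sub, mulVec_smul, Pi.one_def, lapMatrix_mulVec_const_eq_zero, sub_zero]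
  have h := algConn_mul_dotProduct_self_le (G := G) (x := n • Pi.single a 1 - 1)
    (by simp [hsum, hn])
  simp only [hLz, dotProduct_smul, sub_dotProduct, smul_dotProduct, dotProduct_sub,
    one_dotProduct, dotProduct_one, sum_lapMatrix_mulVec, smul_eq_mul] at h
  simp [hsum, hLaa, hn] at h
  rw [hn]
  nlinarith

lemma exists_lapMatrix_mulVec_eq_of_algConn_sup_edge_le {a b : V} (hab : a ≠ b)
    (hG : ¬G.Adj a b) (h : algConn (G ⊔ edge a b) ≤ algConn G) :
    ∃ x : V → ℝ, x ≠ 0 ∧ ∑ v, x v = 0 ∧ G.lapMatrix ℝ *ᵥ x = algConn G • x ∧ x a = x b := by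
  have : Nontrivial V := ⟨a, b, hab⟩
  obtain ⟨x, hx1, hsum, hx⟩ := exists_algConn_eq (G := G ⊔ edge a b)
  have hle := algConn_mul_dotProduct_self_le (G := G) hsum
  rw [hx1, mul_one] at hle
  rw [dotProduct_lapMatrix_sup_edge_mulVec hab hG] at hx
  have hab' : (x a - x b) ^ 2 = 0 := by nlinarith [sq_nonneg (x a - x b)]
  refine ⟨x, ?_, hsum, lapMatrix_mulVec_eq_algConn_smul hsum (by rw [hx1]; linarith), ?_⟩
  · rintro rfl
    simp at hx1
  · simpa [sub_eq_zero] using hab'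

section Iso

variable {W : Type*} [Fintype W] [DecidableEq W] {H : SimpleGraph W} [DecidableRel H.Adj]

lemma dotProduct_lapMatrix_mulVec_comp_iso (e : G ≃g H) (x : W → ℝ) :
    (x ∘ e) ⬝ᵥ G.lapMatrix ℝ *ᵥ (x ∘ e) = x ⬝ᵥ H.lapMatrix ℝ *ᵥ x := by
  simp only [← toLinearMap₂'_apply', lapMatrix_toLinearMap₂', Function.comp_apply]
  congr 1
  rw [← e.toEquiv.sum_comp]
  refine sum_congr rfl fun i _ => ?_
  rw [← e.toEquiv.sum_comp]
  simp [e.map_adj_iff]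

lemma exists_rayleigh_eq_of_iso (f : H ≃g G) {x : V → ℝ} (hx : x ≠ 0) (hsum : ∑ v, x v = 0) :
    ∃ y : W → ℝ, y ≠ 0 ∧ ∑ w, y w = 0 ∧
      (x ⬝ᵥ G.lapMatrix ℝ *ᵥ x) / (x ⬝ᵥ x) = (y ⬝ᵥ H.lapMatrix ℝ *ᵥ y) / (y ⬝ᵥ y) := by
  refine ⟨x ∘ f, fun h => hx (funext fun v => by simpa using congrFun h (f.symm v)), ?_, ?_⟩
  · rwa [← f.toEquiv.sum_comp x] at hsum
  · rw [dotProduct_lapMatrix_mulVec_comp_iso]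
    congr 1
    exact (f.toEquiv.sum_comp fun v => x v * x v).symm

lemma algConn_congr (e : G ≃g H) : algConn G = algConn H := by
  rw [algConn_eq_sInf, algConn_eq_sInf]
  congr 1
  ext a
  constructor
  · rintro ⟨x, hx, hsum, rfl⟩
    exact exists_rayleigh_eq_of_iso e.symm hx hsum
  · rintro ⟨x, hx, hsum, rfl⟩
    exact exists_rayleigh_eq_of_iso e hx hsum

end Iso

end SimpleGraph

def cliqueWithPath {α : Type*} (u : α) (k : ℕ) : SimpleGraph (α ⊕ Fin k) :=
  SimpleGraph.fromRel fun x y =>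
    match x, y with
    | .inl _, .inl _ => True
    | .inl a, .inr i => a = u ∧ i.val = 0
    | .inr i, .inr j => i.val + 1 = j.val
    | _, _ => False

noncomputable instance {α : Type*} (u : α) (k : ℕ) : DecidableRel (cliqueWithPath u k).Adj :=
  Classical.decRel _

namespace cliqueWithPath

variable {α : Type*} {u : α} {k : ℕ}

@[simp] lemma adj_inl_inl {a b : α} :
    (cliqueWithPath u k).Adj (.inl a) (.inl b) ↔ a ≠ b := by
  simp [cliqueWithPath]

@[simp] lemma adj_inl_inr {a : α} {i : Fin k} :
    (cliqueWithPath u k).Adj (.inl a) (.inr i) ↔ a = u ∧ i.val = 0 := by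
  simp [cliqueWithPath]

@[simp] lemma adj_inr_inl {a : α} {i : Fin k} :
    (cliqueWithPath u k).Adj (.inr i) (.inl a) ↔ a = u ∧ i.val = 0 := by
  simp [cliqueWithPath]

@[simp] lemma adj_inr_inr {i j : Fin k} :
    (cliqueWithPath u k).Adj (.inr i) (.inr j) ↔ i.val + 1 = j.val ∨ j.val + 1 = i.val := by
  simp only [cliqueWithPath, SimpleGraph.fromRel_adj, ne_eq, Sum.inr.injEq, and_iff_right_iff_imp]
  rintro h rfl
  omega

variable [Fintype α] [DecidableEq α]

lemma degree_inl {w : α} (hw : w ≠ u) :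
    (cliqueWithPath u k).degree (.inl w) = Fintype.card α - 1 := by
  rw [← card_neighborFinset_eq_degree,
    show (cliqueWithPath u k).neighborFinset (.inl w) = (univ.erase w).map .inl by
      ext (b | i) <;> simp [hw, eq_comm]]
  simp

lemma algConn_lt_card [Nontrivial α] : algConn (cliqueWithPath u (k + 1)) < Fintype.card α := by
  obtain ⟨w, hw⟩ := exists_ne u
  have h := algConn_mul_card_sub_one_le (G := cliqueWithPath u (k + 1)) (.inl w)
  have hr : 1 < Fintype.card α := Fintype.one_lt_card
  simp only [degree_inl hw, Fintype.card_sum, Fintype.card_fin] at h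
  push_cast [Nat.cast_sub hr.le] at h
  have hr' : (1 : ℝ) < Fintype.card α := by exact_mod_cast hr
  nlinarith

lemma lapMatrix_mulVec_inl (x : α ⊕ Fin (k + 1) → ℝ) (w : α) :
    ((cliqueWithPath u (k + 1)).lapMatrix ℝ *ᵥ x) (.inl w) =
      ∑ b, (x (.inl w) - x (.inl b)) + if w = u then x (.inl w) - x (.inr 0) else 0 := by
  rw [lapMatrix_mulVec_apply_eq_sum_ite, Fintype.sum_sum_type]
  congr 1
  · exact sum_congr rfl fun b _ => by by_cases h : w = b <;> simp [h]
  · by_cases h : w = u <;> simp [h, Fin.val_eq_zero_iff]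

variable {μ : ℝ} {x : α ⊕ Fin (k + 1) → ℝ}

lemma eq_on_clique_of_lapMatrix_mulVec_eq_smul {v : α} (hvu : v ≠ u)
    (hμ : μ < Fintype.card α) (hx : (cliqueWithPath u (k + 1)).lapMatrix ℝ *ᵥ x = μ • x)
    (hv : x (.inl v) = x (.inr 0)) (w : α) : x (.inl w) = x (.inl v) := by
  have hrow : ∀ y, (Fintype.card α - μ) * x (.inl y) +
      (if y = u then x (.inl y) - x (.inr 0) else 0) = ∑ b, x (.inl b) := by
    intro y
    have h := congrFun hx (.inl y)
    rw [lapMatrix_mulVec_inl, sum_sub_distrib, sum_const, card_univ, nsmul_eq_mul,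
      Pi.smul_apply, smul_eq_mul] at h
    linear_combination h
  have hv' := hrow v
  rw [if_neg hvu] at hv'
  have h := hrow w
  by_cases hwu : w = u
  · rw [if_pos hwu, ← hv] at h
    have : (Fintype.card α + 1 - μ) * (x (.inl w) - x (.inl v)) = 0 := by
      linear_combination h - hv'
    exact sub_eq_zero.mp ((mul_eq_zero.mp this).resolve_left (by linarith))
  · rw [if_neg hwu] at h
    have : (Fintype.card α - μ) * (x (.inl w) - x (.inl v)) = 0 := by
      linear_combination h - hv'
    exact sub_eq_zero.mp ((mul_eq_zero.mp this).resolve_left (by linarith))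

lemma eq_on_path_of_lapMatrix_mulVec_eq_smul
    (hx : (cliqueWithPath u (k + 1)).lapMatrix ℝ *ᵥ x = μ • x) {c : ℝ}
    (hclique : ∀ w, x (.inl w) = c) (h0 : x (.inr 0) = c) (i : Fin (k + 1)) :
    x (.inr i) = c := by
  have hμc : μ * c = 0 := by
    have h := congrFun hx (.inl u)
    simp only [lapMatrix_mulVec_inl, hclique, h0, sub_self, sum_const_zero, ite_self,
      add_zero, Pi.smul_apply, smul_eq_mul] at h
    exact h.symm
  suffices ∀ m, ∀ i : Fin (k + 1), i.val ≤ m → x (.inr i) = c from this i i le_rfl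
  intro m
  induction m with
  | zero =>
    intro i hi
    obtain rfl : i = 0 := Fin.ext (Nat.le_zero.mp hi)
    exact h0
  | succ m ih =>
    intro i hi
    rcases Nat.lt_or_ge m i.val with hmi | hmi
    swap
    · exact ih i hmi
    -- the row of the path vertex `j` just before `i` reads `c - x i = μ c = 0`
    set j : Fin (k + 1) := ⟨m, by omega⟩
    have h := congrFun hx (.inr j)
    rw [Pi.smul_apply, smul_eq_mul, ih j le_rfl, hμc, lapMatrix_mulVec_apply_eq_sum_ite,
      sum_eq_single (.inr i)] at h
    · simp only [j, adj_inr_inr, if_pos (Or.inl (by omega) : m + 1 = i.val ∨ _),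
        ih j le_rfl] at h
      exact (sub_eq_zero.mp h).symm
    · rintro (a | i') - hne
      · simp only [ih j le_rfl, hclique, sub_self, ite_self]
      · split_ifs with hadj
        · have hi' : i'.val ≠ i.val := fun h => hne (congrArg _ (Fin.ext h))
          simp only [j, adj_inr_inr] at hadj
          rw [ih j le_rfl, ih i' (by omega), sub_self]
        · rfl
    · simp

lemma eq_zero_of_lapMatrix_mulVec_eq_smul {v : α} (hvu : v ≠ u) (hμ : μ < Fintype.card α)
    (hx : (cliqueWithPath u (k + 1)).lapMatrix ℝ *ᵥ x = μ • x)
    (hv : x (.inl v) = x (.inr 0)) (hsum : ∑ p, x p = 0) : x = 0 := by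
  have hclique := eq_on_clique_of_lapMatrix_mulVec_eq_smul hvu hμ hx hv
  have hconst : ∀ p, x p = x (.inl v) := by
    rintro (w | i)
    exacts [hclique w, eq_on_path_of_lapMatrix_mulVec_eq_smul hx hclique hv.symm i]
  rw [sum_congr rfl fun p _ => hconst p, sum_const, card_univ, nsmul_eq_mul] at hsum
  have hc := (mul_eq_zero.mp hsum).resolve_left (Nat.cast_ne_zero.mpr Fintype.card_ne_zero)
  exact funext fun p => (hconst p).trans hc

end cliqueWithPath

lemma cliquePlusPath2_eq_sup_edge {r : ℕ} (hr : 2 ≤ r) (k : ℕ) :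
    cliquePlusPath2 r (k + 1) = cliqueWithPath (⟨r - 1, by omega⟩ : Fin r) (k + 1) ⊔
      edge (.inl ⟨r - 2, by omega⟩) (.inr 0) := by
  ext (a | i) (b | j) <;>
    simp only [cliquePlusPath2, fromRel_adj, sup_adj, edge_adj, cliqueWithPath.adj_inl_inr,
      cliqueWithPath.adj_inr_inl, cliqueWithPath.adj_inl_inl, cliqueWithPath.adj_inr_inr, ne_eq,
      reduceCtorEq, not_false_eq_true, true_and, and_true, or_false, false_and, and_false,
      Sum.inl.injEq, Sum.inr.injEq, Fin.ext_iff, Fin.val_zero, false_or, or_self]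
  all_goals omega

lemma algConn_kiteGraph {r : ℕ} (hr : 0 < r) (k : ℕ) :
    algConn (kiteGraph (r + k) r) = algConn (cliqueWithPath (⟨r - 1, by omega⟩ : Fin r) k) :=
  algConn_congr
    { toEquiv := Equiv.sumCongr (Equiv.refl _) (finCongr (by omega))
      map_rel_iff' := by
        rintro (a | i) (b | j) <;> simp [kiteGraph, Fin.ext_iff]
        omega }

theorem stmt12 {r k : ℕ} (hr : 3 ≤ r) (hk : 1 ≤ k) :
    algConn (kiteGraph (r + k) r) < algConn (cliquePlusPath2 r k) := by
  obtain ⟨k, rfl⟩ := Nat.exists_eq_add_of_le' hk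
  have : Nontrivial (Fin r) := Fin.nontrivial_iff_two_le.mpr (by omega)
  have hvu : (⟨r - 2, by omega⟩ : Fin r) ≠ ⟨r - 1, by omega⟩ := by simp [Fin.ext_iff]; omega
  rw [algConn_kiteGraph (by omega), cliquePlusPath2_eq_sup_edge (by omega)]
  by_contra! h
  obtain ⟨x, hx0, hsum, hx, hxv⟩ :=
    exists_lapMatrix_mulVec_eq_of_algConn_sup_edge_le (by simp) (by simp [hvu]) h
  exact hx0 (cliqueWithPath.eq_zero_of_lapMatrix_mulVec_eq_smul hvu
    cliqueWithPath.algConn_lt_card hx hxv hsum)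
end
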